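/- arXiv:2509.21775 — 4 statements merged into one kernel-verified Lean document; each statement's English description precedes it below -/
import Mathlib

section
/- In the free associative algebra 𝔅 = ℂ⟨u_n : n ∈ ℤ⟩, let 𝔍_ω be the two-sided ideal generated by {u_n u_{n+1} − ω u_{n+1} u_n : n ∈ ℤ} ∪ {u_n u_m − u_m u_n : |n−m| > 1}, with ω ∈ ℂ*. Then for each n, the element φ_γ(b_n b_{n+1} − b_{n+1} b_n − (ω−1)a_n) = (u_{2n−1}+u_{2n−2}+γ)(u_{2n+1}+u_{2n}+γ) − (u_{2n+1}+u_{2n}+γ)(u_{2n−1}+u_{2n−2}+γ) − (ω−1)u_{2n}u_{2n−1} lies in 𝔍_ω. -/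
/-- The generator `u_n` of the free algebra `ℂ⟨u_n : n ∈ ℤ⟩`. -/
noncomputable def uu (n : ℤ) : FreeAlgebra ℂ ℤ := FreeAlgebra.ι ℂ n

/-- The generators of the quantisation ideal `𝔍_ω` of the Volterra hierarchy:
`u_n u_{n+1} − ω u_{n+1} u_n` and `u_n u_m − u_m u_n` for `|n−m| > 1`. -/
def volGens (ω : ℂ) : Set (FreeAlgebra ℂ ℤ) :=
  {x | ∃ n : ℤ, x = uu n * uu (n + 1) - ω • (uu (n + 1) * uu n)} ∪
  {x | ∃ n m : ℤ, 1 < |n - m| ∧ x = uu n * uu m - uu m * uu n}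

lemma central_comm_cancel {R : Type*} [Ring R] (x y z : R)
    (h1 : z * x = x * z) (h2 : z * y = y * z) :
    (x + z) * (y + z) - (y + z) * (x + z) = x * y - y * x := by
  simp only [mul_add, add_mul, h1, h2]
  abel

/-- The image under `φ_γ` of the Toda relation `b_n b_{n+1} − b_{n+1} b_n − (ω−1) a_n`,
namely `(u_{2n−1}+u_{2n−2}+γ)(u_{2n+1}+u_{2n}+γ) − (u_{2n+1}+u_{2n}+γ)(u_{2n−1}+u_{2n−2}+γ)
− (ω−1) u_{2n} u_{2n−1}`, lies in the two-sided ideal `𝔍_ω`. -/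
theorem stmt7 (ω : ℂ) (hω : ω ≠ 0) (γ : ℂ) (n : ℤ) :
    (uu (2*n - 1) + uu (2*n - 2) + algebraMap ℂ (FreeAlgebra ℂ ℤ) γ)
        * (uu (2*n + 1) + uu (2*n) + algebraMap ℂ (FreeAlgebra ℂ ℤ) γ)
      - (uu (2*n + 1) + uu (2*n) + algebraMap ℂ (FreeAlgebra ℂ ℤ) γ)
        * (uu (2*n - 1) + uu (2*n - 2) + algebraMap ℂ (FreeAlgebra ℂ ℤ) γ)
      - (ω - 1) • (uu (2*n) * uu (2*n - 1)) ∈ TwoSidedIdeal.span (volGens ω) := by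
  set a := uu (2*n - 1)
  set b := uu (2*n - 2)
  set c := uu (2*n + 1)
  set d := uu (2*n)
  have key : (a + b + algebraMap ℂ (FreeAlgebra ℂ ℤ) γ)
        * (c + d + algebraMap ℂ (FreeAlgebra ℂ ℤ) γ)
      - (c + d + algebraMap ℂ (FreeAlgebra ℂ ℤ) γ)
        * (a + b + algebraMap ℂ (FreeAlgebra ℂ ℤ) γ)
      - (ω - 1) • (d * a)
      = (a * c - c * a) + (b * c - c * b) + (b * d - d * b)
        + (a * d - ω • (d * a)) := by
    rw [central_comm_cancel (a + b) (c + d) _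
      (Algebra.commutes γ (a + b)) (Algebra.commutes γ (c + d))]
    simp only [mul_add, add_mul, sub_smul, one_smul]
    abel
  rw [key]
  have comm_mem : ∀ p q : ℤ, 1 < |p - q| →
      uu p * uu q - uu q * uu p ∈ TwoSidedIdeal.span (volGens ω) := fun p q h =>
    TwoSidedIdeal.subset_span (Or.inr ⟨p, q, h, rfl⟩)
  have h1 : a * c - c * a ∈ TwoSidedIdeal.span (volGens ω) := by
    have := comm_mem (2*n - 1) (2*n + 1) (by rw [show (2*n - 1) - (2*n + 1) = (-2:ℤ) from by ring]; norm_num)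
    simpa using this
  have h2 : b * c - c * b ∈ TwoSidedIdeal.span (volGens ω) := by
    have := comm_mem (2*n - 2) (2*n + 1) (by rw [show (2*n - 2) - (2*n + 1) = (-3:ℤ) from by ring]; norm_num)
    simpa using this
  have h3 : b * d - d * b ∈ TwoSidedIdeal.span (volGens ω) := by
    have := comm_mem (2*n - 2) (2*n) (by rw [show (2*n - 2) - (2*n) = (-2:ℤ) from by ring]; norm_num)
    simpa using this
  have h4 : a * d - ω • (d * a) ∈ TwoSidedIdeal.span (volGens ω) := by
    have : uu (2*n - 1) * uu (2*n - 1 + 1) - ω • (uu (2*n - 1 + 1) * uu (2*n - 1))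
        ∈ TwoSidedIdeal.span (volGens ω) :=
      TwoSidedIdeal.subset_span (Or.inl ⟨2*n - 1, rfl⟩)
    have e : (2*n - 1 + 1 : ℤ) = 2*n := by ring
    rw [e] at this
    exact this
  exact add_mem (add_mem (add_mem h1 h2) h3) h4
end

section
/- In the quantum algebra with generators u_n, v_n (n ∈ ℤ) subject to the relations v_n u_n − 1 = ω(u_n v_n − 1), [v_n, v_m] = [u_n, u_m] = 0 for all n ≠ m, and [v_n, u_m] = 0 for n ≠ m (ω ∈ ℂ*), the two elements H₁⁺ = ∑_n u_{n+1} v_n and H₁⁻ = ∑_n u_{n−1} v_n commute: for any finite truncations of these sums over a large enough window, the commutator [∑_{|n|≤N} u_{n+1}v_n, ∑_{|m|≤N} u_{m−1}v_m] reduces modulo the ideal to boundary terms only; equivalently, in the quotient algebra [u_{n+1}v_n, u_{m−1}v_m] + [u_{m+1}v_m, u_{n−1}v_n] sums telescope to zero. -/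
/-- Generators `u_n`, `v_n` of the free algebra `ℂ⟨u_n, v_n : n ∈ ℤ⟩`. -/
noncomputable def ug (n : ℤ) : FreeAlgebra ℂ (ℤ ⊕ ℤ) := FreeAlgebra.ι ℂ (Sum.inl n)
noncomputable def vg (n : ℤ) : FreeAlgebra ℂ (ℤ ⊕ ℤ) := FreeAlgebra.ι ℂ (Sum.inr n)

/-- The generators of the Ablowitz–Ladik quantisation ideal:
`v_n u_n − 1 − ω (u_n v_n − 1)`, and all commutators of pairs of generators with distinct
indices. -/
def alGens (ω : ℂ) : Set (FreeAlgebra ℂ (ℤ ⊕ ℤ)) :=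
  {x | ∃ n : ℤ, x = vg n * ug n - 1 - ω • (ug n * vg n - 1)} ∪
  {x | ∃ n m : ℤ, n ≠ m ∧ x = ug n * ug m - ug m * ug n} ∪
  {x | ∃ n m : ℤ, n ≠ m ∧ x = vg n * vg m - vg m * vg n} ∪
  {x | ∃ n m : ℤ, n ≠ m ∧ x = vg n * ug m - ug m * vg n}

lemma al_key {R : Type*} [Ring R] (w um u0 u1 v0 v1 v2 : R)
    (h00 : v0 * u0 = w * (u0 * v0) + (1 - w))
    (h11 : v1 * u1 = w * (u1 * v1) + (1 - w))
    (cu01 : Commute u0 u1) (cum1 : Commute um u1)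
    (cv01 : Commute v0 v1) (cv02 : Commute v0 v2)
    (c0m : Commute v0 um) (c01 : Commute v0 u1)
    (c21 : Commute v2 u1)
    (cw0 : Commute w u0) (cw1 : Commute w u1) :
    ((u1 * v0) * (um * v0) - (um * v0) * (u1 * v0))
      + ((u1 * v0) * (u0 * v1) - (u0 * v1) * (u1 * v0))
      + ((u1 * v0) * (u1 * v2) - (u1 * v2) * (u1 * v0))
      - ((1 - w) * (u1 * v1) - (1 - w) * (u0 * v0)) = 0 := by
  have cw1' : Commute u1 (1 - w) := ((Commute.one_right u1).sub_right cw1.symm)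
  have cw0' : Commute u0 (1 - w) := ((Commute.one_right u0).sub_right cw0.symm)
  have hA : (u1 * v0) * (um * v0) = (um * v0) * (u1 * v0) := by
    rw [c0m.mul_mul_mul_comm, c01.mul_mul_mul_comm, cum1.eq]
  have hC : (u1 * v0) * (u1 * v2) = (u1 * v2) * (u1 * v0) := by
    rw [c01.mul_mul_mul_comm, c21.mul_mul_mul_comm, cv02.eq]
  have hB1 : (u1 * v0) * (u0 * v1) = w * ((u1 * u0) * (v0 * v1)) + (1 - w) * (u1 * v1) := by
    calc (u1 * v0) * (u0 * v1) = u1 * ((v0 * u0) * v1) := by noncomm_ring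
      _ = u1 * ((w * (u0 * v0) + (1 - w)) * v1) := by rw [h00]
      _ = (u1 * w) * ((u0 * v0) * v1) + (u1 * (1 - w)) * v1 := by noncomm_ring
      _ = (w * u1) * ((u0 * v0) * v1) + ((1 - w) * u1) * v1 := by rw [cw1.eq, cw1'.eq]
      _ = w * ((u1 * u0) * (v0 * v1)) + (1 - w) * (u1 * v1) := by noncomm_ring
  have hB2 : (u0 * v1) * (u1 * v0) = w * ((u0 * u1) * (v1 * v0)) + (1 - w) * (u0 * v0) := by
    calc (u0 * v1) * (u1 * v0) = u0 * ((v1 * u1) * v0) := by noncomm_ring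
      _ = u0 * ((w * (u1 * v1) + (1 - w)) * v0) := by rw [h11]
      _ = (u0 * w) * ((u1 * v1) * v0) + (u0 * (1 - w)) * v0 := by noncomm_ring
      _ = (w * u0) * ((u1 * v1) * v0) + ((1 - w) * u0) * v0 := by rw [cw0.eq, cw0'.eq]
      _ = w * ((u0 * u1) * (v1 * v0)) + (1 - w) * (u0 * v0) := by noncomm_ring
  rw [hA, hC, hB1, hB2, cu01.eq, cv01.eq]
  noncomm_ring

/-- In the quantum Ablowitz–Ladik algebra, the local functionals `H₁⁺ = ∑ u_{n+1} v_n` and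
`H₁⁻ = ∑ u_{m−1} v_m` commute: for each `n`, the sum of the interacting commutators
`[u_{n+1}v_n, u_{m−1}v_m]` for `m ∈ {n, n+1, n+2}` telescopes, i.e. equals
`(1−ω) u_{n+1}v_{n+1} − (1−ω) u_n v_n` modulo the quantisation ideal, so that the total
double sum telescopes to zero. -/
theorem stmt11 (ω : ℂ) (hω : ω ≠ 0) (n : ℤ) :
    ((ug (n+1) * vg n) * (ug (n-1) * vg n) - (ug (n-1) * vg n) * (ug (n+1) * vg n))
      + ((ug (n+1) * vg n) * (ug n * vg (n+1)) - (ug n * vg (n+1)) * (ug (n+1) * vg n))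
      + ((ug (n+1) * vg n) * (ug (n+1) * vg (n+2)) - (ug (n+1) * vg (n+2)) * (ug (n+1) * vg n))
      - ((1 - ω) • (ug (n+1) * vg (n+1)) - (1 - ω) • (ug n * vg n))
      ∈ TwoSidedIdeal.span (alGens ω) := by
  set I := TwoSidedIdeal.span (alGens ω) with hI
  set c := I.ringCon with hc
  set π := c.mk' with hπ
  -- generators vanish in the quotient
  have hz : ∀ x ∈ alGens ω, π x = 0 := by
    intro x hx
    have hxI : x ∈ I := TwoSidedIdeal.subset_span hx
    have : c x 0 := (TwoSidedIdeal.mem_iff I x).mp hxI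
    have h0 : π x = π 0 := c.eq.mpr this
    simpa using h0
  set w : c.Quotient := π (algebraMap ℂ _ ω) with hw
  -- exchange relations
  have hrel : ∀ k : ℤ, π (vg k) * π (ug k) = w * (π (ug k) * π (vg k)) + (1 - w) := by
    intro k
    have h := hz _ (Or.inl (Or.inl (Or.inl ⟨k, rfl⟩)))
    rw [Algebra.smul_def] at h
    simp only [map_sub, map_mul, map_one] at h
    rw [sub_sub] at h
    rw [sub_eq_zero.mp h]
    noncomm_ring
  -- commutation relations
  have huu : ∀ k m : ℤ, k ≠ m → Commute (π (ug k)) (π (ug m)) := by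
    intro k m hkm
    have h := hz _ (Or.inl (Or.inl (Or.inr ⟨k, m, hkm, rfl⟩)))
    simp only [map_sub, map_mul] at h
    exact sub_eq_zero.mp h
  have hvv : ∀ k m : ℤ, k ≠ m → Commute (π (vg k)) (π (vg m)) := by
    intro k m hkm
    have h := hz _ (Or.inl (Or.inr ⟨k, m, hkm, rfl⟩))
    simp only [map_sub, map_mul] at h
    exact sub_eq_zero.mp h
  have hvu : ∀ k m : ℤ, k ≠ m → Commute (π (vg k)) (π (ug m)) := by
    intro k m hkm
    have h := hz _ (Or.inr ⟨k, m, hkm, rfl⟩)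
    simp only [map_sub, map_mul] at h
    exact sub_eq_zero.mp h
  have hwc : ∀ x : FreeAlgebra ℂ (ℤ ⊕ ℤ), Commute w (π x) := by
    intro x
    show w * π x = π x * w
    rw [hw, ← map_mul, ← map_mul, Algebra.commutes]
  -- the element to verify
  rw [TwoSidedIdeal.mem_iff]
  rw [show (0 : FreeAlgebra ℂ (ℤ ⊕ ℤ)) = 0 from rfl]
  apply c.eq.mp
  show π _ = π 0
  rw [map_zero]
  have e1 : π ((1 - ω) • (ug (n+1) * vg (n+1))) = (1 - w) * (π (ug (n+1)) * π (vg (n+1))) := by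
    rw [Algebra.smul_def, map_mul, map_mul, map_sub, map_one, map_sub, map_one, hw]
  have e0 : π ((1 - ω) • (ug n * vg n)) = (1 - w) * (π (ug n) * π (vg n)) := by
    rw [Algebra.smul_def, map_mul, map_mul, map_sub, map_one, map_sub, map_one, hw]
  simp only [map_sub, map_add, map_mul, e1, e0]
  exact al_key w (π (ug (n-1))) (π (ug n)) (π (ug (n+1))) (π (vg n)) (π (vg (n+1)))
    (π (vg (n+2)))
    (hrel n) (hrel (n+1))
    (huu n (n+1) (by omega)) (huu (n-1) (n+1) (by omega))
    (hvv n (n+1) (by omega)) (hvv n (n+2) (by omega))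
    (hvu n (n-1) (by omega)) (hvu n (n+1) (by omega))
    (hvu (n+2) (n+1) (by omega))
    (hwc _) (hwc _)
end

section
/- Let p ≥ 1 be fixed and let #_α : ℤ → ℤ_{≥0} be a finitely supported function, and define P_α(ω) = ∏_{r≥p} C(∑_{l=0}^p #_α(r−l) − 1, #_α(r))_ω · ∏_{r=0}^{p−1} C(∑_{l=0}^r #_α(l), #_α(r))_ω · ∏_{r<0} C(∑_{l=0}^p #_α(r+l) − 1, #_α(r))_ω, with P_{α−1} the same expression with #_α replaced by its shift #_{α−1}(r) = #_α(r+1). Then P_α(ω)·(ω^{s₁} − 1) = P_{α−1}(ω)·(ω^{s₀} − 1) in ℂ[ω], where s₁ = ∑_{r=1}^p #_α(r) and s₀ = ∑_{r=0}^{p−1} #_α(r). -/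
open Finset

/-- The Gaussian binomial coefficient `C(n,k)_ω`, as a polynomial expression in `ω`,
via the Pascal-type recursion. -/
def qbinom {R : Type*} [CommRing R] (ω : R) : ℕ → ℕ → R
  | _, 0 => 1
  | 0, _ + 1 => 0
  | n + 1, k + 1 => qbinom ω n k + ω ^ (k + 1) * qbinom ω n (k + 1)

/-- The factor of `P_α(ω)` at site `r ∈ ℤ`, for a multiplicity function `f = #_α : ℤ → ℕ`:
`C(∑_{l=0}^p f(r−l) − 1, f(r))_ω` for `r ≥ p`, `C(∑_{l=0}^r f(l), f(r))_ω` for `0 ≤ r < p`,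
and `C(∑_{l=0}^p f(r+l) − 1, f(r))_ω` for `r < 0`. -/
noncomputable def pFactor {R : Type*} [CommRing R] (ω : R) (p : ℕ) (f : ℤ → ℕ) (r : ℤ) : R :=
  if (p : ℤ) ≤ r then qbinom ω ((∑ l ∈ range (p + 1), f (r - l)) - 1) (f r)
  else if 0 ≤ r then qbinom ω (∑ l ∈ Finset.Icc (0 : ℤ) r, f l) (f r)
  else qbinom ω ((∑ l ∈ range (p + 1), f (r + l)) - 1) (f r)

/-- `P_α(ω)`: the (finitely supported) product of the factors `pFactor` over all `r ∈ ℤ`. -/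
noncomputable def Pfun {R : Type*} [CommRing R] (ω : R) (p : ℕ) (f : ℤ → ℕ) : R :=
  ∏ᶠ r : ℤ, pFactor ω p f r

section basic
variable {R S : Type*} [CommRing R] [CommRing S] (ω : R)

lemma qbinom_zero_right (n : ℕ) : qbinom ω n 0 = 1 := by cases n <;> rfl

lemma qbinom_eq_zero_of_lt : ∀ {n k : ℕ}, n < k → qbinom ω n k = 0
  | 0, k + 1, _ => rfl
  | n + 1, k + 1, h => by
      rw [qbinom, qbinom_eq_zero_of_lt (by omega), qbinom_eq_zero_of_lt (by omega)]
      ring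

lemma qbinom_self : ∀ n : ℕ, qbinom ω n n = 1
  | 0 => rfl
  | n + 1 => by
      rw [qbinom, qbinom_self n, qbinom_eq_zero_of_lt ω (by omega)]
      ring

lemma map_qbinom (φ : R →+* S) : ∀ n k : ℕ, φ (qbinom ω n k) = qbinom (φ ω) n k
  | n, 0 => by rw [qbinom_zero_right, qbinom_zero_right, map_one]
  | 0, k + 1 => by rw [show qbinom ω 0 (k+1) = 0 from rfl, show qbinom (φ ω) 0 (k+1) = 0 from rfl, map_zero]
  | n + 1, k + 1 => by
      rw [qbinom, qbinom, map_add, map_mul, map_pow, map_qbinom φ n k, map_qbinom φ n (k+1)]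

def qfact (ω : R) (n : ℕ) : R := ∏ i ∈ range n, (ω ^ (i + 1) - 1)

lemma qfact_zero : qfact ω 0 = 1 := rfl

lemma qfact_succ (n : ℕ) : qfact ω (n + 1) = qfact ω n * (ω ^ (n + 1) - 1) :=
  prod_range_succ _ _

lemma qbinom_mul_qfact : ∀ n k : ℕ, k ≤ n →
    qbinom ω n k * qfact ω k * qfact ω (n - k) = qfact ω n
  | n, 0, _ => by simp [qbinom_zero_right, qfact_zero]
  | 0, k + 1, h => by omega
  | n + 1, k + 1, h => by
      have hkn : k ≤ n := by omega
      rw [qbinom]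
      rcases eq_or_lt_of_le hkn with heq | hlt
      · subst heq
        rw [qbinom_self, qbinom_eq_zero_of_lt ω (Nat.lt_succ_self k),
          show k + 1 - (k + 1) = 0 from by omega, qfact_zero]
        ring
      · have hk1n : k + 1 ≤ n := hlt
        have h1 := qbinom_mul_qfact n k hkn
        have h2 := qbinom_mul_qfact n (k + 1) hk1n
        have e2 : n + 1 - (k + 1) = n - k := by omega
        have e4 : qfact ω (k + 1) = qfact ω k * (ω ^ (k + 1) - 1) := qfact_succ ω k
        have e5 : qfact ω (n - k) = qfact ω (n - (k + 1)) * (ω ^ (n - k) - 1) := by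
          rw [show n - k = n - (k + 1) + 1 from by omega, qfact_succ]
        have e6 : qfact ω (n + 1) = qfact ω n * (ω ^ (n + 1) - 1) := qfact_succ ω n
        have e3 : ω ^ (k + 1) * ω ^ (n - k) = ω ^ (n + 1) := by
          rw [← pow_add]; congr 1; omega
        rw [e2]
        linear_combination (qbinom ω n k * qfact ω (n - k)) * e4 + (ω ^ (k + 1) - 1) * h1
          + (ω ^ (k + 1) * qbinom ω n (k + 1) * qfact ω (k + 1)) * e5
          + (ω ^ (k + 1) * (ω ^ (n - k) - 1)) * h2 + qfact ω n * e3 - e6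

end basic

section key
variable {R : Type*} [CommRing R] (ω : R)

lemma Icc_succ_nat (j : ℕ) : Finset.Icc 1 (j + 1) = insert (j + 1) (Finset.Icc 1 j) := by
  ext x; simp [Finset.mem_Icc, Finset.mem_insert]; omega

lemma prodA (m : ℕ → ℕ) : ∀ j : ℕ,
    (∏ r ∈ Icc 1 j, qbinom ω (∑ l ∈ range (r + 1), m l) (m r)) *
      (∏ r ∈ Icc 1 j, qfact ω (m r)) * qfact ω (m 0)
      = qfact ω (∑ l ∈ range (j + 1), m l)
  | 0 => by simp
  | j + 1 => by
      have hm0 : m 0 ≤ ∑ l ∈ range (j + 1), m l :=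
        Finset.single_le_sum (f := m) (fun i _ => Nat.zero_le _) (by simp)
      have hnotmem : j + 1 ∉ Finset.Icc 1 j := by simp
      rw [Icc_succ_nat, Finset.prod_insert hnotmem, Finset.prod_insert hnotmem]
      have IH := prodA m j
      have hb : qbinom ω (∑ l ∈ range (j + 1 + 1), m l) (m (j + 1)) * qfact ω (m (j + 1)) *
          qfact ω (∑ l ∈ range (j + 1), m l) = qfact ω (∑ l ∈ range (j + 1 + 1), m l) := by
        have := qbinom_mul_qfact ω (∑ l ∈ range (j + 1 + 1), m l) (m (j + 1))
          (by rw [Finset.sum_range_succ]; omega)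
        rwa [show (∑ l ∈ range (j + 1 + 1), m l) - m (j + 1) = ∑ l ∈ range (j + 1), m l from by
          rw [Finset.sum_range_succ]; omega] at this
      calc qbinom ω (∑ l ∈ range (j + 1 + 1), m l) (m (j + 1)) *
            (∏ r ∈ Icc 1 j, qbinom ω (∑ l ∈ range (r + 1), m l) (m r)) *
            (qfact ω (m (j + 1)) * ∏ r ∈ Icc 1 j, qfact ω (m r)) * qfact ω (m 0)
          = qbinom ω (∑ l ∈ range (j + 1 + 1), m l) (m (j + 1)) * qfact ω (m (j + 1)) *
            ((∏ r ∈ Icc 1 j, qbinom ω (∑ l ∈ range (r + 1), m l) (m r)) *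
              (∏ r ∈ Icc 1 j, qfact ω (m r)) * qfact ω (m 0)) := by ring
        _ = qbinom ω (∑ l ∈ range (j + 1 + 1), m l) (m (j + 1)) * qfact ω (m (j + 1)) *
            qfact ω (∑ l ∈ range (j + 1), m l) := by rw [IH]
        _ = qfact ω (∑ l ∈ range (j + 1 + 1), m l) := hb

lemma prodB (m : ℕ → ℕ) : ∀ j : ℕ,
    (∏ r ∈ Icc 1 j, qbinom ω ((∑ l ∈ range (r + 1), m l) - m 0) (m r)) *
      (∏ r ∈ Icc 1 j, qfact ω (m r))
      = qfact ω ((∑ l ∈ range (j + 1), m l) - m 0)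
  | 0 => by simp [qfact_zero]
  | j + 1 => by
      have hm0 : m 0 ≤ ∑ l ∈ range (j + 1), m l :=
        Finset.single_le_sum (f := m) (fun i _ => Nat.zero_le _) (by simp)
      have hnotmem : j + 1 ∉ Finset.Icc 1 j := by simp
      rw [Icc_succ_nat, Finset.prod_insert hnotmem, Finset.prod_insert hnotmem]
      have IH := prodB m j
      have hb : qbinom ω ((∑ l ∈ range (j + 1 + 1), m l) - m 0) (m (j + 1)) * qfact ω (m (j + 1)) *
          qfact ω ((∑ l ∈ range (j + 1), m l) - m 0)
          = qfact ω ((∑ l ∈ range (j + 1 + 1), m l) - m 0) := by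
        have := qbinom_mul_qfact ω ((∑ l ∈ range (j + 1 + 1), m l) - m 0) (m (j + 1))
          (by rw [Finset.sum_range_succ]; omega)
        rwa [show (∑ l ∈ range (j + 1 + 1), m l) - m 0 - m (j + 1)
            = (∑ l ∈ range (j + 1), m l) - m 0 from by rw [Finset.sum_range_succ]; omega] at this
      calc qbinom ω ((∑ l ∈ range (j + 1 + 1), m l) - m 0) (m (j + 1)) *
            (∏ r ∈ Icc 1 j, qbinom ω ((∑ l ∈ range (r + 1), m l) - m 0) (m r)) *
            (qfact ω (m (j + 1)) * ∏ r ∈ Icc 1 j, qfact ω (m r))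
          = qbinom ω ((∑ l ∈ range (j + 1 + 1), m l) - m 0) (m (j + 1)) * qfact ω (m (j + 1)) *
            ((∏ r ∈ Icc 1 j, qbinom ω ((∑ l ∈ range (r + 1), m l) - m 0) (m r)) *
              (∏ r ∈ Icc 1 j, qfact ω (m r))) := by ring
        _ = qbinom ω ((∑ l ∈ range (j + 1 + 1), m l) - m 0) (m (j + 1)) * qfact ω (m (j + 1)) *
            qfact ω ((∑ l ∈ range (j + 1), m l) - m 0) := by rw [IH]
        _ = qfact ω ((∑ l ∈ range (j + 1 + 1), m l) - m 0) := hb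

end key

lemma keyid_field {K : Type*} [Field K] (q : K) (hq : ∀ n : ℕ, 1 ≤ n → q ^ n - (1 : K) ≠ 0)
    (p : ℕ) (hp : 1 ≤ p) (m : ℕ → ℕ) :
    (∏ r ∈ Icc 1 (p - 1), qbinom q (∑ l ∈ range (r + 1), m l) (m r)) *
      qbinom q ((∑ l ∈ range (p + 1), m l) - 1) (m p) *
      (q ^ ((∑ l ∈ range (p + 1), m l) - m 0) - 1)
    = qbinom q ((∑ l ∈ range (p + 1), m l) - 1) (m 0) *
      (∏ r ∈ Icc 1 (p - 1), qbinom q ((∑ l ∈ range (r + 1), m l) - m 0) (m r)) *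
      qbinom q ((∑ l ∈ range (p + 1), m l) - m 0) (m p) *
      (q ^ ((∑ l ∈ range (p + 1), m l) - m p) - 1) := by
  have qfact_ne : ∀ n : ℕ, qfact q n ≠ 0 := fun n =>
    Finset.prod_ne_zero_iff.mpr (fun i _ => hq (i + 1) (by omega))
  set S := ∑ l ∈ range (p + 1), m l with hSdef
  have hsplit : S = (∑ l ∈ range p, m l) + m p := Finset.sum_range_succ m p
  have ha : m 0 ≤ ∑ l ∈ range p, m l :=
    Finset.single_le_sum (f := m) (fun i _ => Nat.zero_le _) (Finset.mem_range.mpr (by omega))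
  by_cases hS0 : S = 0
  · rw [show S - m 0 = 0 from by omega, show S - m p = 0 from by omega]
    simp
  by_cases hbS : m p = S
  · rw [qbinom_eq_zero_of_lt q (show S - 1 < m p by omega),
      show S - m p = 0 from by omega]
    simp
  by_cases haS : m 0 = S
  · rw [show S - m 0 = 0 from by omega,
      qbinom_eq_zero_of_lt q (show S - 1 < m 0 by omega)]
    simp
  -- main case
  have haS' : m 0 < S := by omega
  have hbS' : m p < S := by omega
  have hab : m 0 + m p ≤ S := by omega
  set PA := ∏ r ∈ Icc 1 (p - 1), qbinom q (∑ l ∈ range (r + 1), m l) (m r) with hPAdef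
  set PB := ∏ r ∈ Icc 1 (p - 1), qbinom q ((∑ l ∈ range (r + 1), m l) - m 0) (m r) with hPBdef
  set Q := ∏ r ∈ Icc 1 (p - 1), qfact q (m r) with hQdef
  have hQne : Q ≠ 0 := Finset.prod_ne_zero_iff.mpr (fun i _ => qfact_ne _)
  have hPA : PA * Q * qfact q (m 0) = qfact q (S - m p) := by
    have h := prodA q m (p - 1)
    rw [show p - 1 + 1 = p from by omega,
      show (∑ l ∈ range p, m l) = S - m p from by omega] at h
    exact h
  have hPB : PB * Q = qfact q (S - m 0 - m p) := by
    have h := prodB q m (p - 1)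
    rw [show p - 1 + 1 = p from by omega,
      show (∑ l ∈ range p, m l) - m 0 = S - m 0 - m p from by omega] at h
    exact h
  have h3 := qbinom_mul_qfact q (S - 1) (m p) (by omega)
  have h4 := qbinom_mul_qfact q (S - 1) (m 0) (by omega)
  have h5 := qbinom_mul_qfact q (S - m 0) (m p) (by omega)
  have h6 : qfact q (S - m p) = qfact q (S - 1 - m p) * (q ^ (S - m p) - 1) := by
    rw [show S - m p = (S - 1 - m p) + 1 from by omega, qfact_succ]
  have h7 : qfact q (S - m 0) = qfact q (S - 1 - m 0) * (q ^ (S - m 0) - 1) := by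
    rw [show S - m 0 = (S - 1 - m 0) + 1 from by omega, qfact_succ]
  have hZ : Q * qfact q (m 0) * qfact q (m p) * qfact q (S - 1 - m 0) *
      qfact q (S - 1 - m p) * qfact q (S - m 0 - m p) ≠ 0 :=
    mul_ne_zero (mul_ne_zero (mul_ne_zero (mul_ne_zero (mul_ne_zero hQne (qfact_ne _))
      (qfact_ne _)) (qfact_ne _)) (qfact_ne _)) (qfact_ne _)
  apply mul_right_cancel₀ hZ
  linear_combination
    (qbinom q (S - 1) (m p) * qfact q (m p) * qfact q (S - 1 - m p) *
      (q ^ (S - m 0) - 1) * qfact q (S - 1 - m 0) * qfact q (S - m 0 - m p)) * hPA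
    + (qfact q (S - m p) * (q ^ (S - m 0) - 1) * qfact q (S - 1 - m 0) *
      qfact q (S - m 0 - m p)) * h3
    + (qfact q (S - 1) * (q ^ (S - m 0) - 1) * qfact q (S - 1 - m 0) *
      qfact q (S - m 0 - m p)) * h6
    - (qfact q (S - 1 - m p) * (q ^ (S - m p) - 1) * qfact q (S - 1) *
      qfact q (S - m 0 - m p)) * h7
    - (PB * Q * qbinom q (S - m 0) (m p) * qfact q (m p) * qfact q (S - m 0 - m p) *
      qfact q (S - 1 - m p) * (q ^ (S - m p) - 1)) * h4
    - (qfact q (S - 1) * qbinom q (S - m 0) (m p) * qfact q (m p) * qfact q (S - m 0 - m p) *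
      qfact q (S - 1 - m p) * (q ^ (S - m p) - 1)) * hPB
    - (qfact q (S - 1) * qfact q (S - m 0 - m p) * qfact q (S - 1 - m p) *
      (q ^ (S - m p) - 1)) * h5

lemma keyid_polyint (p : ℕ) (hp : 1 ≤ p) (m : ℕ → ℕ) :
    (∏ r ∈ Icc 1 (p - 1), qbinom (Polynomial.X : Polynomial ℤ) (∑ l ∈ range (r + 1), m l) (m r)) *
      qbinom (Polynomial.X : Polynomial ℤ) ((∑ l ∈ range (p + 1), m l) - 1) (m p) *
      ((Polynomial.X : Polynomial ℤ) ^ ((∑ l ∈ range (p + 1), m l) - m 0) - 1)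
    = qbinom (Polynomial.X : Polynomial ℤ) ((∑ l ∈ range (p + 1), m l) - 1) (m 0) *
      (∏ r ∈ Icc 1 (p - 1), qbinom (Polynomial.X : Polynomial ℤ) ((∑ l ∈ range (r + 1), m l) - m 0) (m r)) *
      qbinom (Polynomial.X : Polynomial ℤ) ((∑ l ∈ range (p + 1), m l) - m 0) (m p) *
      ((Polynomial.X : Polynomial ℤ) ^ ((∑ l ∈ range (p + 1), m l) - m p) - 1) := by
  set K := FractionRing (Polynomial ℤ)
  have hq : ∀ n : ℕ, 1 ≤ n →
      (algebraMap (Polynomial ℤ) K Polynomial.X) ^ n - (1 : K) ≠ 0 := by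
    intro n hn h
    have : algebraMap (Polynomial ℤ) K ((Polynomial.X : Polynomial ℤ) ^ n - 1) = 0 := by
      rw [map_sub, map_pow, map_one]; exact h
    have h2 : ((Polynomial.X : Polynomial ℤ) ^ n - 1) = 0 :=
      IsFractionRing.injective (Polynomial ℤ) K (by simpa using this)
    have := Polynomial.X_pow_sub_C_ne_zero (R := ℤ) (show 0 < n by omega) 1
    simp only [map_one] at this
    exact this h2
  have h := keyid_field (algebraMap (Polynomial ℤ) K Polynomial.X) hq p hp m
  apply IsFractionRing.injective (Polynomial ℤ) K
  simp only [map_mul, map_prod, map_sub, map_pow, map_one,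
    map_qbinom (Polynomial.X : Polynomial ℤ) (algebraMap (Polynomial ℤ) K)]
  exact h

lemma keyid {R : Type*} [CommRing R] (ω : R) (p : ℕ) (hp : 1 ≤ p) (m : ℕ → ℕ) :
    (∏ r ∈ Icc 1 (p - 1), qbinom ω (∑ l ∈ range (r + 1), m l) (m r)) *
      qbinom ω ((∑ l ∈ range (p + 1), m l) - 1) (m p) *
      (ω ^ ((∑ l ∈ range (p + 1), m l) - m 0) - 1)
    = qbinom ω ((∑ l ∈ range (p + 1), m l) - 1) (m 0) *
      (∏ r ∈ Icc 1 (p - 1), qbinom ω ((∑ l ∈ range (r + 1), m l) - m 0) (m r)) *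
      qbinom ω ((∑ l ∈ range (p + 1), m l) - m 0) (m p) *
      (ω ^ ((∑ l ∈ range (p + 1), m l) - m p) - 1) := by
  have h := congrArg (Polynomial.eval₂RingHom (Int.castRingHom R) ω) (keyid_polyint p hp m)
  simpa only [map_mul, map_prod, map_sub, map_pow, map_one,
    map_qbinom (Polynomial.X : Polynomial ℤ) (Polynomial.eval₂RingHom (Int.castRingHom R) ω),
    Polynomial.coe_eval₂RingHom, Polynomial.eval₂_X] using h

lemma castIcc0 (n : ℕ) :
    Finset.Icc (0 : ℤ) (n : ℤ) = (Finset.range (n + 1)).image (fun i : ℕ => (i : ℤ)) := by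
  ext x
  simp only [Finset.mem_Icc, Finset.mem_image, Finset.mem_range]
  constructor
  · rintro ⟨h0, h1⟩; exact ⟨x.toNat, by omega, by omega⟩
  · rintro ⟨i, hi, rfl⟩; omega

lemma castIcc1 (n : ℕ) :
    Finset.Icc (1 : ℤ) (n : ℤ) = (Finset.range n).image (fun i : ℕ => (i : ℤ) + 1) := by
  ext x
  simp only [Finset.mem_Icc, Finset.mem_image, Finset.mem_range]
  constructor
  · rintro ⟨h0, h1⟩; exact ⟨(x - 1).toNat, by omega, by omega⟩
  · rintro ⟨i, hi, rfl⟩; omega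

lemma prod_Icc_cast {M : Type*} [CommMonoid M] (φ : ℤ → M) (n : ℕ) :
    ∏ l ∈ Finset.Icc (0 : ℤ) (n : ℤ), φ l = ∏ l ∈ range (n + 1), φ (l : ℤ) := by
  rw [castIcc0, Finset.prod_image]
  intro a _ b _ h
  exact Nat.cast_injective h

lemma sum_Icc_cast (f : ℤ → ℕ) (n : ℕ) :
    ∑ l ∈ Finset.Icc (0 : ℤ) (n : ℤ), f l = ∑ l ∈ range (n + 1), f (l : ℤ) := by
  rw [castIcc0, Finset.sum_image]
  intro a _ b _ h
  exact Nat.cast_injective h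

lemma sum_Icc1_cast (f : ℤ → ℕ) (n : ℕ) :
    ∑ l ∈ Finset.Icc (1 : ℤ) (n : ℤ), f l = ∑ l ∈ range n, f ((l : ℤ) + 1) := by
  rw [castIcc1, Finset.sum_image]
  intro a _ b _ h
  simp only at h; omega

lemma pFactor_eq_one {R : Type*} [CommRing R] (ω : R) (p : ℕ) (f : ℤ → ℕ) (r : ℤ)
    (h : f r = 0) : pFactor ω p f r = 1 := by
  unfold pFactor
  split_ifs <;> rw [h, qbinom_zero_right]

/-- The two-step relation `P_α(ω) (ω^{s₁} − 1) = P_{α−1}(ω) (ω^{s₀} − 1)`, where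
`s₁ = ∑_{r=1}^p #_α(r)`, `s₀ = ∑_{r=0}^{p−1} #_α(r)`, and `#_{α−1}(r) = #_α(r+1)`. -/
theorem stmt14 {R : Type*} [CommRing R] [Algebra ℂ R] (ω : R) (p : ℕ) (hp : 1 ≤ p)
    (f : ℤ → ℕ) (hf : (Function.support f).Finite) :
    Pfun ω p f * (ω ^ (∑ r ∈ Finset.Icc (1 : ℤ) (p : ℤ), f r) - 1)
      = Pfun ω p (fun r => f (r + 1)) * (ω ^ (∑ r ∈ range p, f (r : ℤ)) - 1) := by
  classical
  set s : Finset ℤ := hf.toFinset ∪ Finset.Icc (0 : ℤ) (p : ℤ) with hs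
  have hIccsub : Finset.Icc (0 : ℤ) (p : ℤ) ⊆ s := Finset.subset_union_right
  have hPf : Pfun ω p f = ∏ r ∈ s, pFactor ω p f r := by
    apply finprod_eq_prod_of_mulSupport_subset
    intro r hr
    simp only [Function.mem_mulSupport] at hr
    have hfr : f r ≠ 0 := fun h => hr (pFactor_eq_one ω p f r h)
    exact Finset.mem_coe.mpr (Finset.mem_union_left _ (hf.mem_toFinset.mpr hfr))
  have hPg : Pfun ω p (fun x => f (x + 1))
      = ∏ r ∈ s, pFactor ω p (fun x => f (x + 1)) (r - 1) := by
    rw [Pfun, show (∏ᶠ r : ℤ, pFactor ω p (fun x => f (x + 1)) r)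
        = ∏ᶠ r : ℤ, pFactor ω p (fun x => f (x + 1)) (r - 1) from
      (finprod_comp_equiv (Equiv.subRight (1 : ℤ))).symm]
    apply finprod_eq_prod_of_mulSupport_subset
    intro r hr
    simp only [Function.mem_mulSupport] at hr
    have hfr : f r ≠ 0 := by
      intro h
      apply hr
      apply pFactor_eq_one
      show f (r - 1 + 1) = 0
      rwa [sub_add_cancel]
    exact Finset.mem_coe.mpr (Finset.mem_union_left _ (hf.mem_toFinset.mpr hfr))
  have hFH : ∀ r ∈ s \ Finset.Icc (0 : ℤ) (p : ℤ),
      pFactor ω p f r = pFactor ω p (fun x => f (x + 1)) (r - 1) := by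
    intro r hr
    have hr' : r < 0 ∨ (p : ℤ) < r := by
      simp only [Finset.mem_sdiff, Finset.mem_Icc, not_and, not_le] at hr
      omega
    rcases hr' with h | h
    · have c1 : ¬ ((p : ℤ) ≤ r) := by omega
      have c2 : ¬ ((0 : ℤ) ≤ r) := by omega
      have c3 : ¬ ((p : ℤ) ≤ r - 1) := by omega
      have c4 : ¬ ((0 : ℤ) ≤ r - 1) := by omega
      unfold pFactor
      rw [if_neg c1, if_neg c2, if_neg c3, if_neg c4]
      have hsum : (∑ l ∈ range (p + 1), (fun x => f (x + 1)) (r - 1 + l))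
          = ∑ l ∈ range (p + 1), f (r + l) := by
        apply Finset.sum_congr rfl
        intro l _
        show f (r - 1 + l + 1) = f (r + l)
        congr 1 <;> omega
      have hval : (fun x => f (x + 1)) (r - 1) = f r := by
        show f (r - 1 + 1) = f r
        congr 1 <;> omega
      rw [hsum, hval]
    · have c1 : (p : ℤ) ≤ r := by omega
      have c3 : (p : ℤ) ≤ r - 1 := by omega
      unfold pFactor
      rw [if_pos c1, if_pos c3]
      have hsum : (∑ l ∈ range (p + 1), (fun x => f (x + 1)) (r - 1 - l))
          = ∑ l ∈ range (p + 1), f (r - l) := by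
        apply Finset.sum_congr rfl
        intro l _
        show f (r - 1 - l + 1) = f (r - l)
        congr 1 <;> omega
      have hval : (fun x => f (x + 1)) (r - 1) = f r := by
        show f (r - 1 + 1) = f r
        congr 1 <;> omega
      rw [hsum, hval]
  suffices hmain : (∏ r ∈ Finset.Icc (0 : ℤ) (p : ℤ), pFactor ω p f r) *
      (ω ^ (∑ r ∈ Finset.Icc (1 : ℤ) (p : ℤ), f r) - 1)
      = (∏ r ∈ Finset.Icc (0 : ℤ) (p : ℤ), pFactor ω p (fun x => f (x + 1)) (r - 1)) *
        (ω ^ (∑ r ∈ range p, f (r : ℤ)) - 1) by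
    rw [hPf, hPg, ← Finset.prod_sdiff hIccsub (f := fun r => pFactor ω p f r),
      ← Finset.prod_sdiff hIccsub (f := fun r => pFactor ω p (fun x => f (x + 1)) (r - 1)),
      Finset.prod_congr rfl hFH, mul_assoc, mul_assoc, hmain]
  -- now the core computation
  have hrange : range p = insert 0 (Finset.Icc 1 (p - 1)) := by
    ext x
    simp only [Finset.mem_range, Finset.mem_insert, Finset.mem_Icc]
    omega
  have h0mem : (0 : ℕ) ∉ Finset.Icc 1 (p - 1) := by simp
  have eF0 : pFactor ω p f ((0 : ℕ) : ℤ) = 1 := by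
    unfold pFactor
    rw [if_neg (by omega), if_pos (by omega)]
    rw [show ((0 : ℕ) : ℤ) = (0 : ℤ) from rfl, Finset.Icc_self, Finset.sum_singleton, qbinom_self]
  have eFr : ∀ r ∈ Finset.Icc 1 (p - 1), pFactor ω p f ((r : ℕ) : ℤ)
      = qbinom ω (∑ l ∈ range (r + 1), f (l : ℤ)) (f (r : ℤ)) := by
    intro r hr
    simp only [Finset.mem_Icc] at hr
    unfold pFactor
    rw [if_neg (by omega), if_pos (by omega), sum_Icc_cast]
  have eFp : pFactor ω p f ((p : ℕ) : ℤ)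
      = qbinom ω ((∑ l ∈ range (p + 1), f (l : ℤ)) - 1) (f (p : ℤ)) := by
    unfold pFactor
    rw [if_pos le_rfl]
    have h1 : ∀ l ∈ range (p + 1), f ((p : ℤ) - (l : ℕ))
        = f ((p + 1 - 1 - l : ℕ) : ℤ) := by
      intro l hl
      simp only [Finset.mem_range] at hl
      congr 1
      omega
    have h2 : ∑ j ∈ range (p + 1), f ((p + 1 - 1 - j : ℕ) : ℤ)
        = ∑ j ∈ range (p + 1), f (j : ℤ) :=
      Finset.sum_range_reflect (fun i : ℕ => f (i : ℤ)) (p + 1)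
    rw [Finset.sum_congr rfl h1, h2]
  have eH0 : pFactor ω p (fun x => f (x + 1)) (((0 : ℕ) : ℤ) - 1)
      = qbinom ω ((∑ l ∈ range (p + 1), f (l : ℤ)) - 1) (f ((0 : ℕ) : ℤ)) := by
    unfold pFactor
    rw [if_neg (by omega), if_neg (by omega)]
    have hsum : (∑ l ∈ range (p + 1), (fun x => f (x + 1)) (((0 : ℕ) : ℤ) - 1 + l))
        = ∑ l ∈ range (p + 1), f (l : ℤ) := by
      apply Finset.sum_congr rfl
      intro l _
      show f (((0 : ℕ) : ℤ) - 1 + l + 1) = f (l : ℤ)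
      congr 1 <;> omega
    have hval : (fun x => f (x + 1)) (((0 : ℕ) : ℤ) - 1) = f ((0 : ℕ) : ℤ) := by
      show f (((0 : ℕ) : ℤ) - 1 + 1) = f ((0 : ℕ) : ℤ)
      congr 1 <;> omega
    rw [hsum, hval]
  have eHr : ∀ r ∈ Finset.Icc 1 (p - 1), pFactor ω p (fun x => f (x + 1)) (((r : ℕ) : ℤ) - 1)
      = qbinom ω ((∑ l ∈ range (r + 1), f (l : ℤ)) - f ((0 : ℕ) : ℤ)) (f (r : ℤ)) := by
    intro r hr
    simp only [Finset.mem_Icc] at hr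
    unfold pFactor
    rw [if_neg (by omega), if_pos (by omega)]
    have hval : (fun x => f (x + 1)) (((r : ℕ) : ℤ) - 1) = f (r : ℤ) := by
      show f (((r : ℕ) : ℤ) - 1 + 1) = f (r : ℤ)
      congr 1 <;> omega
    have hIcc : ((r : ℕ) : ℤ) - 1 = ((r - 1 : ℕ) : ℤ) := by omega
    rw [hval, hIcc, sum_Icc_cast]
    have hsum : (∑ l ∈ range (r - 1 + 1), (fun x => f (x + 1)) (l : ℤ))
        = ∑ l ∈ range r, f ((l + 1 : ℕ) : ℤ) := by
      rw [show r - 1 + 1 = r from by omega]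
      apply Finset.sum_congr rfl
      intro l _
      show f ((l : ℤ) + 1) = f ((l + 1 : ℕ) : ℤ)
      congr 1 <;> omega
    rw [hsum]
    congr 1
    have hss : ∑ l ∈ range (r + 1), f ((l : ℕ) : ℤ)
        = (∑ l ∈ range r, f ((l + 1 : ℕ) : ℤ)) + f ((0 : ℕ) : ℤ) :=
      Finset.sum_range_succ' (fun i : ℕ => f (i : ℤ)) r
    omega
  have eHp : pFactor ω p (fun x => f (x + 1)) (((p : ℕ) : ℤ) - 1)
      = qbinom ω ((∑ l ∈ range (p + 1), f (l : ℤ)) - f ((0 : ℕ) : ℤ)) (f (p : ℤ)) := by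
    unfold pFactor
    rw [if_neg (by omega), if_pos (by omega)]
    have hval : (fun x => f (x + 1)) (((p : ℕ) : ℤ) - 1) = f (p : ℤ) := by
      show f (((p : ℕ) : ℤ) - 1 + 1) = f (p : ℤ)
      congr 1 <;> omega
    have hIcc : ((p : ℕ) : ℤ) - 1 = ((p - 1 : ℕ) : ℤ) := by omega
    rw [hval, hIcc, sum_Icc_cast]
    have hsum : (∑ l ∈ range (p - 1 + 1), (fun x => f (x + 1)) (l : ℤ))
        = ∑ l ∈ range p, f ((l + 1 : ℕ) : ℤ) := by
      rw [show p - 1 + 1 = p from by omega]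
      apply Finset.sum_congr rfl
      intro l _
      show f ((l : ℤ) + 1) = f ((l + 1 : ℕ) : ℤ)
      congr 1 <;> omega
    rw [hsum]
    congr 1
    have hss : ∑ l ∈ range (p + 1), f ((l : ℕ) : ℤ)
        = (∑ l ∈ range p, f ((l + 1 : ℕ) : ℤ)) + f ((0 : ℕ) : ℤ) :=
      Finset.sum_range_succ' (fun i : ℕ => f (i : ℤ)) p
    omega
  have hprodF : ∏ r ∈ Finset.Icc (0 : ℤ) (p : ℤ), pFactor ω p f r
      = (∏ r ∈ Finset.Icc 1 (p - 1), qbinom ω (∑ l ∈ range (r + 1), f (l : ℤ)) (f (r : ℤ))) *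
        qbinom ω ((∑ l ∈ range (p + 1), f (l : ℤ)) - 1) (f (p : ℤ)) := by
    rw [prod_Icc_cast (fun r => pFactor ω p f r) p, Finset.prod_range_succ, hrange,
      Finset.prod_insert h0mem, eF0, one_mul, eFp, Finset.prod_congr rfl eFr]
  have hprodH : ∏ r ∈ Finset.Icc (0 : ℤ) (p : ℤ), pFactor ω p (fun x => f (x + 1)) (r - 1)
      = qbinom ω ((∑ l ∈ range (p + 1), f (l : ℤ)) - 1) (f ((0 : ℕ) : ℤ)) *
        (∏ r ∈ Finset.Icc 1 (p - 1),
          qbinom ω ((∑ l ∈ range (r + 1), f (l : ℤ)) - f ((0 : ℕ) : ℤ)) (f (r : ℤ))) *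
        qbinom ω ((∑ l ∈ range (p + 1), f (l : ℤ)) - f ((0 : ℕ) : ℤ)) (f (p : ℤ)) := by
    rw [prod_Icc_cast (fun r => pFactor ω p (fun x => f (x + 1)) (r - 1)) p,
      Finset.prod_range_succ, hrange, Finset.prod_insert h0mem, eH0, eHp,
      Finset.prod_congr rfl eHr]
  have eX : (∑ r ∈ Finset.Icc (1 : ℤ) (p : ℤ), f r)
      = (∑ l ∈ range (p + 1), f (l : ℤ)) - f ((0 : ℕ) : ℤ) := by
    rw [sum_Icc1_cast]
    have h1 : ∀ l ∈ range p, f ((l : ℤ) + 1) = f ((l + 1 : ℕ) : ℤ) := by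
      intro l _
      congr 1 <;> omega
    rw [Finset.sum_congr rfl h1]
    have hss : ∑ l ∈ range (p + 1), f ((l : ℕ) : ℤ)
        = (∑ l ∈ range p, f ((l + 1 : ℕ) : ℤ)) + f ((0 : ℕ) : ℤ) :=
      Finset.sum_range_succ' (fun i : ℕ => f (i : ℤ)) p
    omega
  have eY : (∑ r ∈ range p, f (r : ℤ))
      = (∑ l ∈ range (p + 1), f (l : ℤ)) - f ((p : ℕ) : ℤ) := by
    have hss : ∑ l ∈ range (p + 1), f ((l : ℕ) : ℤ)
        = (∑ l ∈ range p, f ((l : ℕ) : ℤ)) + f ((p : ℕ) : ℤ) :=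
      Finset.sum_range_succ (fun i : ℕ => f (i : ℤ)) p
    omega
  rw [hprodF, hprodH, eX, eY]
  exact keyid ω p hp (fun i : ℕ => f (i : ℤ))
end

section
/- In the free associative algebra ℂ⟨v_n : n ∈ ℤ⟩, consider the ideal J = ⟨v_m v_n − ω_{nm} v_n v_m : n > m⟩ with ω_{nm} ∈ ℂ*. If J is stable under the derivation ∂_{t_1} defined by ∂_{t_1}(v_n) = v_{n+1}v_n² − v_n² v_{n−1} (the first non-Abelian modified Volterra lift), then necessarily ω_{nm} = ω when n−m is odd and ω_{nm} = ω^{−1} when n−m is even, for a single nonzero parameter ω. Conversely, with these values J is ∂_{t_1}-stable. -/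
/-!
The relations `v_m v_n = ω_{nm} v_n v_m` are realised by a skew representation of the free
algebra on `ℂ[X_j]`: `v_k` acts by `p ↦ X_k · σ_k p`, where `σ_k` rescales `X_j` by `ω_{jk}` for
`j > k`. It kills `J`, hence `∂_{t_1}(v_m v_n − ω_{nm} v_n v_m)`; applied to `1`, and after
discarding all but three variables, only one monomial survives, and its coefficient gives
`ω_{nm} ω_{n+1,m} = 1` and `ω_{m+2,m} ω_{m+2,m+1} = 1`. These force `ω_{m+1,m}` to be constant and
`ω_{nm}` to alternate in `n`.

Conversely, in the quotient by `J` every word can be sorted into decreasing order of indices, and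
for alternating parameters the sorted form of `∂_{t_1}(v_m v_n − ω_{nm} v_n v_m)` vanishes.
Since `∂_{t_1}` obeys the Leibniz rule, this suffices for stability of `J`.
-/

open MvPolynomial

/-- The generator `v_n` of the free algebra `ℂ⟨v_n : n ∈ ℤ⟩`. -/
noncomputable def vv (n : ℤ) : FreeAlgebra ℂ ℤ := FreeAlgebra.ι ℂ n

/-- The ideal `J = ⟨v_m v_n − ω_{nm} v_n v_m : n > m⟩` determined by the parameters `ωp`. -/
noncomputable def mVolIdeal (ωp : ℤ → ℤ → ℂ) : TwoSidedIdeal (FreeAlgebra ℂ ℤ) :=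
  TwoSidedIdeal.span {x | ∃ n m : ℤ, m < n ∧ x = vv m * vv n - (ωp n m) • (vv n * vv m)}

section SkewRep

variable {K ι : Type*} [CommRing K] [LinearOrder ι] (q : ι → ι → K)

noncomputable def skewScale (k : ι) : MvPolynomial ι K →ₐ[K] MvPolynomial ι K :=
  aeval fun j => if k < j then C (q j k) * X j else X j

noncomputable def skewMulX (k : ι) : Module.End K (MvPolynomial ι K) :=
  LinearMap.mulLeft K (X k) ∘ₗ (skewScale q k).toLinearMap

noncomputable def skewRep : FreeAlgebra K ι →ₐ[K] Module.End K (MvPolynomial ι K) :=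
  FreeAlgebra.lift K (skewMulX q)

@[simp]
lemma skewScale_X (k j : ι) :
    skewScale q k (X j) = if k < j then C (q j k) * X j else X j :=
  aeval_X _ _

@[simp]
lemma skewScale_C (k : ι) (c : K) : skewScale q k (C c) = C c :=
  aeval_C _ _

@[simp]
lemma skewMulX_apply (k : ι) (p : MvPolynomial ι K) : skewMulX q k p = X k * skewScale q k p :=
  rfl

@[simp]
lemma skewRep_ι (k : ι) : skewRep q (FreeAlgebra.ι K k) = skewMulX q k :=
  FreeAlgebra.lift_ι_apply _ _

lemma skewScale_comm (a b : ι) :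
    (skewScale q a).comp (skewScale q b) = (skewScale q b).comp (skewScale q a) := by
  ext j
  by_cases ha : a < j <;> by_cases hb : b < j <;> simp [ha, hb]; ring

lemma skewMulX_mul_skewMulX_of_lt {a b : ι} (h : a < b) :
    skewMulX q a * skewMulX q b = q b a • (skewMulX q b * skewMulX q a) := by
  refine LinearMap.ext fun p => ?_
  have hcomm := congrArg (· p) (skewScale_comm q a b)
  simp only [AlgHom.comp_apply] at hcomm
  simp [h, not_lt_of_gt h, hcomm, smul_eq_C_mul]
  ring

end SkewRep

section KeepVars

variable {K ι : Type*} [CommRing K] (p : ι → Prop) [DecidablePred p]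

noncomputable def keepVars : MvPolynomial ι K →ₐ[K] MvPolynomial ι K :=
  aeval fun j => if p j then X j else 0

@[simp]
lemma keepVars_X (j : ι) : keepVars (K := K) p (X j) = if p j then X j else 0 :=
  aeval_X _ _

@[simp]
lemma keepVars_C (c : K) : keepVars p (C c) = C c :=
  aeval_C _ _

end KeepVars

lemma MvPolynomial.eq_zero_of_C_mul_eq_zero {σ K : Type*} [Field K] {c : K}
    {p : MvPolynomial σ K} (hp : p ≠ 0) (h : C c * p = 0) : c = 0 :=
  C_eq_zero.mp ((mul_eq_zero.mp h).resolve_right hp)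

theorem TwoSidedIdeal.apply_mem_span_of_leibniz {R F : Type*} [Ring R] [FunLike F R R]
    [AddMonoidHomClass F R R] {D : F} (hD : ∀ x y, D (x * y) = D x * y + x * D y) {s : Set R}
    (hs : ∀ x ∈ s, D x ∈ span s) {x : R} (hx : x ∈ span s) : D x ∈ span s := by
  induction hx using span_induction with
  | mem x h => exact hs x h
  | zero => simp
  | add x y _ _ hx hy => simpa using add_mem _ hx hy
  | neg x _ hx => simpa using neg_mem _ hx
  | left_absorb a x hx ihx =>
    rw [hD]; exact add_mem _ (mul_mem_left _ (D a) x hx) (mul_mem_left _ a (D x) ihx)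
  | right_absorb b x hx ihx =>
    rw [hD]; exact add_mem _ (mul_mem_right _ (D x) b ihx) (mul_mem_right _ x (D b) hx)

lemma ite_odd_add_one {α : Type*} [InvolutiveInv α] (ω : α) (k : ℤ) :
    (if Odd (k + 1) then ω else ω⁻¹) = (if Odd k then ω else ω⁻¹)⁻¹ := by
  by_cases h : Odd k <;> simp [odd_add_one, h, ← Int.not_odd_iff_even]

lemma eq_ite_odd_of_mul_eq_one {G : Type*} [DivisionMonoid G] {ωp : ℤ → ℤ → G}
    (hfst : ∀ n m, m < n → ωp n m * ωp (n + 1) m = 1)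
    (hsnd : ∀ m, ωp (m + 2) m * ωp (m + 2) (m + 1) = 1) (n m : ℤ) (h : m < n) :
    ωp n m = if Odd (n - m) then ωp 1 0 else (ωp 1 0)⁻¹ := by
  have hstep (m : ℤ) : ωp (m + 2) (m + 1) = ωp (m + 1) m := by
    have h1 := hfst (m + 1) m (by omega)
    rw [add_assoc, one_add_one_eq_two] at h1
    exact (left_inv_eq_right_inv h1 (hsnd m)).symm
  have hconst (m : ℤ) : ωp (m + 1) m = ωp 1 0 := by
    induction m using Int.induction_on with
    | zero => simp
    | succ i ih => rw [add_assoc, one_add_one_eq_two, hstep, ih]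
    | pred i ih => rw [← ih, ← hstep (-i - 1)]; ring_nf
  induction n, (show m + 1 ≤ n from h) using Int.leInduction with
  | base => simp [hconst]
  | succ k hk ih =>
    rw [eq_inv_of_mul_eq_one_right (hfst k m (by omega)), ih (by omega),
      show k + 1 - m = k - m + 1 by ring, ite_odd_add_one]

lemma param_eq_inv_of_sub_eq_add_one {α : Type*} [InvolutiveInv α] {ωp : ℤ → ℤ → α} {ω : α}
    (hval : ∀ n m, m < n → ωp n m = if Odd (n - m) then ω else ω⁻¹) {a b c d : ℤ}
    (hab : b < a) (hcd : d < c) (h : c - d = a - b + 1 ∨ a - b = c - d + 1) :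
    ωp c d = (ωp a b)⁻¹ := by
  rcases h with h | h
  · rw [hval c d hcd, hval a b hab, h, ite_odd_add_one]
  · rw [hval c d hcd, hval a b hab, h, ite_odd_add_one, inv_inv]

section Ideal

variable (ωp : ℤ → ℤ → ℂ)

lemma vv_mul_vv_sub_mem {m n : ℤ} (h : m < n) :
    vv m * vv n - ωp n m • (vv n * vv m) ∈ mVolIdeal ωp :=
  TwoSidedIdeal.subset_span ⟨n, m, h, rfl⟩

noncomputable abbrev mVolQuot : FreeAlgebra ℂ ℤ →ₐ[ℂ] (mVolIdeal ωp).ringCon.Quotient :=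
  (mVolIdeal ωp).ringCon.mkₐ ℂ

lemma mem_mVolIdeal_iff {x : FreeAlgebra ℂ ℤ} : x ∈ mVolIdeal ωp ↔ mVolQuot ωp x = 0 := by
  conv_lhs => rw [← TwoSidedIdeal.ker_ringCon_mk' (mVolIdeal ωp)]
  exact TwoSidedIdeal.mem_ker _

variable {ωp}

lemma skewRep_eq_zero_of_mem {x : FreeAlgebra ℂ ℤ} (hx : x ∈ mVolIdeal ωp) :
    skewRep ωp x = 0 := by
  refine (TwoSidedIdeal.mem_ker _).mp (TwoSidedIdeal.span_le.mpr ?_ hx)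
  rintro _ ⟨n, m, h, rfl⟩
  simp [TwoSidedIdeal.mem_ker, vv, skewMulX_mul_skewMulX_of_lt ωp h]

lemma mVolQuot_vv_mul_vv {a b : ℤ} (h : a < b) :
    mVolQuot ωp (vv a) * mVolQuot ωp (vv b) =
      ωp b a • (mVolQuot ωp (vv b) * mVolQuot ωp (vv a)) := by
  rw [← map_mul, ← map_mul, ← map_smul, ← sub_eq_zero, ← map_sub, ← mem_mVolIdeal_iff]
  exact vv_mul_vv_sub_mem ωp h

lemma mVolQuot_vv_mul_vv_mul {a b : ℤ} (h : a < b) (y : (mVolIdeal ωp).ringCon.Quotient) :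
    mVolQuot ωp (vv a) * (mVolQuot ωp (vv b) * y) =
      ωp b a • (mVolQuot ωp (vv b) * (mVolQuot ωp (vv a) * y)) := by
  rw [← mul_assoc, mVolQuot_vv_mul_vv h, smul_mul_assoc, mul_assoc]

end Ideal

section Derivation

variable {D : FreeAlgebra ℂ ℤ →ₗ[ℂ] FreeAlgebra ℂ ℤ}
    (hD : ∀ x y, D (x * y) = D x * y + x * D y)
    (hDgen : ∀ n : ℤ, D (vv n) = vv (n + 1) * (vv n) ^ 2 - (vv n) ^ 2 * vv (n - 1))
    {ωp : ℤ → ℤ → ℂ}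
include hD hDgen

lemma apply_vv_mul_vv (a b : ℤ) :
    D (vv a * vv b) = vv (a + 1) * vv a * vv a * vv b - vv a * vv a * vv (a - 1) * vv b
      + vv a * vv (b + 1) * vv b * vv b - vv a * vv b * vv b * vv (b - 1) := by
  simp only [hD, hDgen, sq, mul_sub, sub_mul, mul_assoc]
  abel

lemma apply_vv_mul_vv_sub_mem {ω : ℂ}
    (hval : ∀ n m, m < n → ωp n m = if Odd (n - m) then ω else ω⁻¹) (hω : ω ≠ 0) {m n : ℤ}
    (h : m < n) : D (vv m * vv n - ωp n m • (vv n * vv m)) ∈ mVolIdeal ωp := by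
  have hq : ωp n m ≠ 0 := by rw [hval n m h]; split_ifs <;> simpa
  have hinv {c d : ℤ} (hcd : d < c) (hdiff : c - d = n - m + 1 ∨ n - m = c - d + 1) :
      ωp c d = (ωp n m)⁻¹ :=
    param_eq_inv_of_sub_eq_add_one hval h hcd hdiff
  rw [mem_mVolIdeal_iff, map_sub, map_smul, apply_vv_mul_vv hD hDgen, apply_vv_mul_vv hD hDgen]
  -- sort every word into decreasing order of indices
  rcases (by omega : n = m + 1 ∨ m + 2 ≤ n) with rfl | h2
  all_goals simp (disch := omega) only [map_sub, map_add, map_mul, map_smul, mul_assoc,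
    mVolQuot_vv_mul_vv, mVolQuot_vv_mul_vv_mul, mul_smul_comm, smul_smul, smul_sub,
    add_sub_cancel_right]
  · rw [hinv (by omega : m - 1 < m + 1) (by omega), hinv (by omega : m < m + 1 + 1) (by omega)]
    match_scalars <;> field_simp <;> ring
  · rw [hinv (by omega : m + 1 < n) (by omega), hinv (by omega : m - 1 < n) (by omega),
      hinv (by omega : m < n + 1) (by omega), hinv (by omega : m < n - 1) (by omega)]
    match_scalars <;> field_simp <;> ring

variable (hJ : ∀ x ∈ mVolIdeal ωp, D x ∈ mVolIdeal ωp)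
include hJ

lemma param_mul_param_succ_fst_eq_one {m n : ℤ} (h : m < n) (hq : ωp n m ≠ 0) :
    ωp n m * ωp (n + 1) m = 1 := by
  have h0 : keepVars (fun j => j = m ∨ j = n ∨ j = n + 1)
      (skewRep ωp (D (vv m * vv n - ωp n m • (vv n * vv m))) 1) = 0 := by
    rw [skewRep_eq_zero_of_mem (hJ _ (vv_mul_vv_sub_mem ωp h))]; simp
  rw [map_sub, map_smul, apply_vv_mul_vv hD hDgen, apply_vv_mul_vv hD hDgen] at h0
  rcases (by omega : n = m + 1 ∨ m + 2 ≤ n) with rfl | h2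
  all_goals simp (disch := omega) only [map_sub, map_add, map_smul, map_mul, skewRep_ι, vv,
    Module.End.mul_apply, LinearMap.sub_apply, LinearMap.add_apply, LinearMap.smul_apply,
    skewMulX_apply, skewScale_X, skewScale_C, keepVars_X, keepVars_C, map_one, if_pos, if_neg,
    true_or, or_true, if_true, mul_one, zero_mul, mul_zero, sub_zero, add_zero, zero_add,
    smul_eq_C_mul, add_sub_cancel_right] at h0
  -- only `X_m X_n² X_{n+1}` survives (for `n = m + 1`, the words in `v_m² v_n²` cancel)
  · have key : C (ωp (m + 1) m * (ωp (m + 1) m * ωp (m + 1 + 1) m - 1)) *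
        (X m * X (m + 1) ^ 2 * X (m + 1 + 1)) = 0 := by
      simp only [map_mul, map_sub, map_one]; linear_combination h0
    have := eq_zero_of_C_mul_eq_zero (by simp [X_ne_zero]) key
    rwa [mul_eq_zero, sub_eq_zero, or_iff_right hq] at this
  · have key : C (ωp n m * (ωp n m * ωp (n + 1) m - 1)) * (X m * X n ^ 2 * X (n + 1)) = 0 := by
      simp only [map_mul, map_sub, map_one]; linear_combination h0
    have := eq_zero_of_C_mul_eq_zero (by simp [X_ne_zero]) key
    rwa [mul_eq_zero, sub_eq_zero, or_iff_right hq] at this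

lemma param_mul_param_succ_snd_eq_one (m : ℤ) (hq : ωp (m + 2) m ≠ 0)
    (hfst : ωp (m + 1) m * ωp (m + 2) m = 1) : ωp (m + 2) m * ωp (m + 2) (m + 1) = 1 := by
  have h0 : keepVars (fun j => j = m ∨ j = m + 1 ∨ j = m + 2)
      (skewRep ωp (D (vv m * vv (m + 2) - ωp (m + 2) m • (vv (m + 2) * vv m))) 1) = 0 := by
    rw [skewRep_eq_zero_of_mem (hJ _ (vv_mul_vv_sub_mem ωp (by omega)))]; simp
  rw [map_sub, map_smul, apply_vv_mul_vv hD hDgen, apply_vv_mul_vv hD hDgen,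
    show m + 2 - 1 = m + 1 by ring] at h0
  simp (disch := omega) only [map_sub, map_add, map_smul, map_mul, skewRep_ι, vv,
    Module.End.mul_apply, LinearMap.sub_apply, LinearMap.add_apply, LinearMap.smul_apply,
    skewMulX_apply, skewScale_X, skewScale_C, keepVars_X, keepVars_C, map_one, if_pos, if_neg,
    true_or, or_true, if_true, mul_one, zero_mul, mul_zero, sub_zero, add_zero,
    smul_eq_C_mul] at h0
  -- by `hfst`, the coefficient of `X_m X_{m+1} X_{m+2}²` vanishes
  have hfstC := congrArg (C (σ := ℤ)) hfst
  have key : C (ωp (m + 2) m * (ωp (m + 2) m * ωp (m + 2) (m + 1) - 1)) *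
      (X m ^ 2 * X (m + 1) * X (m + 2)) = 0 := by
    simp only [map_mul, map_sub, map_one] at hfstC ⊢
    linear_combination h0 + C (ωp (m + 2) m) * (X m * X (m + 1) * X (m + 2) ^ 2) * hfstC
  have := eq_zero_of_C_mul_eq_zero (by simp [X_ne_zero]) key
  rwa [mul_eq_zero, sub_eq_zero, or_iff_right hq] at this

end Derivation

/-- The ideal `J` (with all `ω_{nm} ≠ 0`) is stable under the derivation `∂_{t_1}` of the
first non-Abelian modified Volterra lift, `∂_{t_1}(v_n) = v_{n+1} v_n² − v_n² v_{n−1}`,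
if and only if `ω_{nm} = ω` for `n−m` odd and `ω_{nm} = ω⁻¹` for `n−m` even, for a single
nonzero parameter `ω`. -/
theorem stmt16 (ωp : ℤ → ℤ → ℂ) (hωp : ∀ n m : ℤ, m < n → ωp n m ≠ 0)
    (D : FreeAlgebra ℂ ℤ →ₗ[ℂ] FreeAlgebra ℂ ℤ)
    (hD : ∀ x y, D (x * y) = D x * y + x * D y)
    (hDgen : ∀ n : ℤ, D (vv n) = vv (n + 1) * (vv n) ^ 2 - (vv n) ^ 2 * vv (n - 1)) :
    (∀ x ∈ mVolIdeal ωp, D x ∈ mVolIdeal ωp) ↔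
      ∃ ω : ℂ, ω ≠ 0 ∧ ∀ n m : ℤ, m < n →
        ωp n m = if Odd (n - m) then ω else ω⁻¹ := by
  constructor
  · intro hJ
    have hfst (n m : ℤ) (h : m < n) : ωp n m * ωp (n + 1) m = 1 :=
      param_mul_param_succ_fst_eq_one hD hDgen hJ h (hωp n m h)
    have hsnd (m : ℤ) : ωp (m + 2) m * ωp (m + 2) (m + 1) = 1 :=
      param_mul_param_succ_snd_eq_one hD hDgen hJ m (hωp _ _ (by omega))
        (by simpa [add_assoc] using hfst (m + 1) m (by omega))
    exact ⟨ωp 1 0, hωp 1 0 one_pos, eq_ite_odd_of_mul_eq_one hfst hsnd⟩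
  · rintro ⟨ω, hω, hval⟩ x hx
    refine TwoSidedIdeal.apply_mem_span_of_leibniz hD ?_ hx
    rintro _ ⟨n, m, h, rfl⟩
    exact apply_vv_mul_vv_sub_mem hD hDgen hval hω h
end
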